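/- arXiv:1911.03816 — 2 statements merged into one kernel-verified Lean document; each statement's English description precedes it below -/
import Mathlib

section
/- Let 0 < α ≤ √2 − 1. Then any ℕ-valued random variable X satisfying the recursive distributional equation has P(X = 0) = 1 − α. -/
open scoped ENNReal

/-- The Poisson(α) probability mass function on ℕ. -/
noncomputable def poissonPMF (α : ℝ) (k : ℕ) : ℝ≥0∞ :=
  ENNReal.ofReal (Real.exp (-α) * α ^ k / (Nat.factorial k))

/-- The Geometric(1/2) pmf: P(N = k) = (1/2)^(k+1) for k ≥ 0. -/
noncomputable def geomHalf (k : ℕ) : ℝ≥0∞ := (1 / 2) ^ (k + 1)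

/-- The law of (X - 1)⁺ when X has law μ on ℕ. -/
noncomputable def shiftLaw (μ : ℕ → ℝ≥0∞) (k : ℕ) : ℝ≥0∞ :=
  if k = 0 then μ 0 + μ 1 else μ (k + 1)

/-- Convolution of two (sub-)pmfs on ℕ: the law of an independent sum. -/
noncomputable def convAdd (f g : ℕ → ℝ≥0∞) (k : ℕ) : ℝ≥0∞ :=
  ∑ j ∈ Finset.range (k + 1), f j * g (k - j)

/-- n-fold convolution of a pmf on ℕ: the law of a sum of n i.i.d. copies. -/
noncomputable def iterConv (f : ℕ → ℝ≥0∞) : ℕ → ℕ → ℝ≥0∞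
  | 0 => fun k => if k = 0 then 1 else 0
  | n + 1 => convAdd (iterConv f n) f

/-- μ is the law of an ℕ-valued random variable X satisfying the RDE
    X =_d P + ∑_{i=1}^N (X_i - 1)⁺, with P ~ Poisson(α), N ~ Geom(1/2),
    X_i i.i.d. with law μ, all independent. -/
def SatisfiesRDE (α : ℝ) (μ : ℕ → ℝ≥0∞) : Prop :=
  (∑' k, μ k) = 1 ∧
  ∀ k, μ k = ∑' n, geomHalf n * convAdd (poissonPMF α) (iterConv (shiftLaw μ) n) k

/-- The probability generating function G(s) = E[s^X]. -/
noncomputable def pgf (μ : ℕ → ℝ≥0∞) (s : ℝ) : ℝ := ∑' k, (μ k).toReal * s ^ k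

/-- The mean E[X] = ∑ k · P(X = k), valued in [0,∞]. -/
noncomputable def meanENN (μ : ℕ → ℝ≥0∞) : ℝ≥0∞ := ∑' k : ℕ, (k : ℝ≥0∞) * μ k

/-!
Write `G` for the generating function of `X` and `p = P(X = 0)`. The generating function of
`(X - 1)⁺` is `(G(s) - p + p s) / s`, and summing over the geometric number of summands turns the
equation into the quadratic relation `G(s) (B(s) - G(s)) = s e^{α(s-1)}` on `[0, 1]`, where
`B(s) = (2 - p) s + p`. Hence `(2G(s) - B(s))² = Δ(s) := B(s)² - 4 s e^{α(s-1)}`.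

Near `s = 1` we have `Δ(1 - u) ≈ 4u (p + α - 1)`, which is negative when `p < 1 - α`.
If `p > 1 - α` and `(1 + α)² ≤ 2`, then `Δ > 0` on `[0, 1)`, so `2G - B`, which equals `p` at `0`,
stays positive there. But convexity gives `G(s) ≤ s + (1 - s) p`, hence `2G - B ≤ p u` at
`s = 1 - u`, which is too small for `Δ(1 - u)` when `u = (p + α - 1) / 4`.
-/

theorem ENNReal.tsum_mul_tsum_eq_tsum_sum_range (f g : ℕ → ℝ≥0∞) :
    (∑' n, f n) * ∑' n, g n = ∑' n, ∑ k ∈ Finset.range (n + 1), f k * g (n - k) := by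
  calc (∑' n, f n) * ∑' n, g n = ∑' kl : ℕ × ℕ, f kl.1 * g kl.2 := by
        rw [ENNReal.tsum_prod (f := fun k l => f k * g l), ← ENNReal.tsum_mul_right]
        exact tsum_congr fun k => ENNReal.tsum_mul_left.symm
    _ = ∑' n, ∑ kl ∈ Finset.HasAntidiagonal.antidiagonal n, f kl.1 * g kl.2 := by
        rw [← Finset.HasAntidiagonal.sigmaAntidiagonalEquivProd.tsum_eq, ENNReal.tsum_sigma']
        exact tsum_congr fun n => Finset.tsum_subtype _ (fun kl : ℕ × ℕ => f kl.1 * g kl.2)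
    _ = _ := by simp_rw [Finset.Nat.sum_antidiagonal_eq_sum_range_succ fun k l => f k * g l]

/-- The generating function taken in `ℝ≥0∞`, where rearranging the recursive equation needs no
summability conditions. -/
noncomputable def ennPgf (f : ℕ → ℝ≥0∞) (x : ℝ≥0∞) : ℝ≥0∞ := ∑' k, f k * x ^ k

lemma ennPgf_convAdd (f g : ℕ → ℝ≥0∞) (x : ℝ≥0∞) :
    ennPgf (convAdd f g) x = ennPgf f x * ennPgf g x := by
  rw [ennPgf, ennPgf, ennPgf, ENNReal.tsum_mul_tsum_eq_tsum_sum_range]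
  refine tsum_congr fun n => ?_
  rw [convAdd, Finset.sum_mul]
  refine Finset.sum_congr rfl fun k hk => ?_
  rw [← Nat.add_sub_cancel' (Finset.mem_range_succ_iff.mp hk)]
  simp only [pow_add, Nat.add_sub_cancel_left]
  ring

lemma ennPgf_iterConv (f : ℕ → ℝ≥0∞) (x : ℝ≥0∞) (n : ℕ) :
    ennPgf (iterConv f n) x = ennPgf f x ^ n := by
  induction n with
  | zero => simp [ennPgf, iterConv]
  | succ n ih => rw [iterConv, ennPgf_convAdd, ih, pow_succ]

lemma ennPgf_poissonPMF {α s : ℝ} (hα : 0 ≤ α) (hs : 0 ≤ s) :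
    ennPgf (poissonPMF α) (ENNReal.ofReal s) = ENNReal.ofReal (Real.exp (α * (s - 1))) := by
  have hterm (k : ℕ) : poissonPMF α k * ENNReal.ofReal s ^ k
      = ENNReal.ofReal (Real.exp (-α) * ((α * s) ^ k / k.factorial)) := by
    rw [poissonPMF, ← ENNReal.ofReal_pow hs, ← ENNReal.ofReal_mul (by positivity), mul_pow]
    ring_nf
  have hsum := (Real.summable_pow_div_factorial (α * s)).mul_left (Real.exp (-α))
  rw [ennPgf, tsum_congr hterm, ← ENNReal.ofReal_tsum_of_nonneg (fun k => by positivity) hsum,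
    tsum_mul_left, ← congrFun NormedSpace.exp_eq_tsum_div, ← Real.exp_eq_exp_ℝ, ← Real.exp_add]
  ring_nf

lemma mul_ennPgf_shiftLaw_add (μ : ℕ → ℝ≥0∞) (x : ℝ≥0∞) :
    x * ennPgf (shiftLaw μ) x + μ 0 = ennPgf μ x + μ 0 * x := by
  have hshift : x * ennPgf (shiftLaw μ) x = (μ 0 + μ 1) * x + ∑' k, μ (k + 2) * x ^ (k + 2) := by
    rw [ennPgf, ← ENNReal.tsum_mul_left, tsum_eq_zero_add' ENNReal.summable]
    simp only [shiftLaw, ↓reduceIte, Nat.add_one_ne_zero, pow_succ]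
    ring_nf
  have hμ : ennPgf μ x = μ 0 + μ 1 * x + ∑' k, μ (k + 2) * x ^ (k + 2) := by
    rw [ennPgf, tsum_eq_zero_add' ENNReal.summable, tsum_eq_zero_add' ENNReal.summable]
    simp only [pow_zero, mul_one, zero_add, pow_one, add_assoc]
  rw [hshift, hμ]
  ring

lemma tsum_geomHalf_mul_pow_mul_two (a r : ℝ≥0∞) :
    (∑' n, geomHalf n * (a * r ^ n)) * 2 = a + r * ∑' n, geomHalf n * (a * r ^ n) := by
  have hS : ∑' n, geomHalf n * (a * r ^ n)
      = 2⁻¹ * a + 2⁻¹ * (r * ∑' n, geomHalf n * (a * r ^ n)) := by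
    conv_lhs => rw [tsum_eq_zero_add' ENNReal.summable]
    rw [← ENNReal.tsum_mul_left, ← ENNReal.tsum_mul_left]
    simp only [geomHalf, one_div]
    congr 1
    · simp
    · congr 1; ext n; ring
  have h2 : (2⁻¹ : ℝ≥0∞) * 2 = 1 := ENNReal.inv_mul_cancel two_ne_zero ENNReal.ofNat_ne_top
  nth_rewrite 1 [hS]
  rw [add_mul, mul_right_comm, h2, mul_right_comm, h2, one_mul, one_mul]

lemma pgf_nonneg (μ : ℕ → ℝ≥0∞) {s : ℝ} (hs : 0 ≤ s) : 0 ≤ pgf μ s :=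
  tsum_nonneg fun _ => by positivity

lemma pgf_zero (μ : ℕ → ℝ≥0∞) : pgf μ 0 = (μ 0).toReal := by
  rw [pgf, tsum_eq_single 0 fun k hk => by simp [hk]]
  simp

section pgf

variable {μ : ℕ → ℝ≥0∞}

lemma summable_toReal_mul_pow (hμ : ∑' k, μ k ≠ ∞) {s : ℝ} (hs0 : 0 ≤ s) (hs1 : s ≤ 1) :
    Summable fun k => (μ k).toReal * s ^ k :=
  (ENNReal.summable_toReal hμ).of_nonneg_of_le (fun _ => by positivity)
    fun _ => mul_le_of_le_one_right ENNReal.toReal_nonneg (pow_le_one₀ hs0 hs1)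

lemma ennPgf_ofReal (hμ : ∑' k, μ k ≠ ∞) {s : ℝ} (hs0 : 0 ≤ s) (hs1 : s ≤ 1) :
    ennPgf μ (ENNReal.ofReal s) = ENNReal.ofReal (pgf μ s) := by
  have hfin (k : ℕ) : μ k ≠ ∞ := ne_top_of_le_ne_top hμ (ENNReal.le_tsum k)
  rw [ennPgf, pgf, ENNReal.ofReal_tsum_of_nonneg (fun k => by positivity)
    (summable_toReal_mul_pow hμ hs0 hs1)]
  refine tsum_congr fun k => ?_
  rw [ENNReal.ofReal_mul ENNReal.toReal_nonneg, ENNReal.ofReal_toReal (hfin k),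
    ENNReal.ofReal_pow hs0]

lemma toReal_le_one_of_tsum_eq_one (hμ : ∑' k, μ k = 1) (k : ℕ) : (μ k).toReal ≤ 1 :=
  ENNReal.toReal_le_of_le_ofReal zero_le_one (ENNReal.ofReal_one ▸ hμ ▸ ENNReal.le_tsum k)

lemma continuousOn_pgf (hμ : ∑' k, μ k ≠ ∞) : ContinuousOn (pgf μ) (Set.Icc 0 1) :=
  continuousOn_tsum (fun k => continuousOn_const.mul (continuousOn_pow k))
    (ENNReal.summable_toReal hμ) fun k s hs => by
      rw [norm_mul, Real.norm_of_nonneg ENNReal.toReal_nonneg, norm_pow, Real.norm_of_nonneg hs.1]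
      exact mul_le_of_le_one_right ENNReal.toReal_nonneg (pow_le_one₀ hs.1 hs.2)

lemma pgf_le_add_mul_toReal_zero (hμ : ∑' k, μ k = 1) {s : ℝ} (hs0 : 0 ≤ s) (hs1 : s ≤ 1) :
    pgf μ s ≤ s + (1 - s) * (μ 0).toReal := by
  have hfin : ∑' k, μ k ≠ ∞ := by simp [hμ]
  have hsum := ENNReal.summable_toReal hfin
  have htail : ∑' k, (μ (k + 1)).toReal = 1 - (μ 0).toReal := by
    rw [eq_sub_iff_add_eq', ← hsum.tsum_eq_zero_add, ← ENNReal.tsum_toReal_eq, hμ,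
      ENNReal.toReal_one]
    exact fun k => ne_top_of_le_ne_top hfin (ENNReal.le_tsum k)
  have hle : ∑' k, (μ (k + 1)).toReal * s ^ (k + 1) ≤ s * ∑' k, (μ (k + 1)).toReal := by
    rw [← tsum_mul_left]
    refine ((summable_nat_add_iff 1).mpr (summable_toReal_mul_pow hfin hs0 hs1)).tsum_le_tsum
      (fun k => ?_) (((summable_nat_add_iff 1).mpr hsum).mul_left s)
    rw [mul_comm s]
    exact mul_le_mul_of_nonneg_left (pow_le_of_le_one hs0 hs1 k.succ_ne_zero)
      ENNReal.toReal_nonneg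
  rw [htail] at hle
  rw [pgf, (summable_toReal_mul_pow hfin hs0 hs1).tsum_eq_zero_add, pow_zero, mul_one]
  linarith

end pgf

lemma exp_neg_le_one_sub_add_sq_div_two {y : ℝ} (hy : 0 ≤ y) :
    Real.exp (-y) ≤ 1 - y + y ^ 2 / 2 := by
  have h := Real.quadratic_le_exp_of_nonneg hy
  have hq : 0 ≤ 1 - y + y ^ 2 / 2 := by nlinarith [sq_nonneg (y - 1)]
  rw [Real.exp_neg, inv_le_iff_one_le_mul₀' (Real.exp_pos y)]
  nlinarith [mul_le_mul_of_nonneg_right h hq, sq_nonneg (y ^ 2)]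

noncomputable def rdeDisc (α p s : ℝ) : ℝ := ((2 - p) * s + p) ^ 2 - 4 * s * Real.exp (α * (s - 1))

lemma rdeDisc_one_sub_le (α p : ℝ) {u : ℝ} (hu : u ≤ 1) :
    rdeDisc α p (1 - u) ≤ 4 * u * (p + α - 1) + u ^ 2 * ((2 - p) ^ 2 - 4 * α) := by
  have hexp : 1 - α * u ≤ Real.exp (α * (1 - u - 1)) := by
    have := Real.add_one_le_exp (α * (1 - u - 1))
    linarith
  rw [rdeDisc]
  nlinarith [mul_le_mul_of_nonneg_left hexp (by linarith : 0 ≤ 4 * (1 - u))]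

lemma le_rdeDisc_one_sub {α : ℝ} (hα : 0 ≤ α) (p : ℝ) {u : ℝ} (hu0 : 0 ≤ u) (hu1 : u ≤ 1) :
    4 * u * (p + α - 1) + u ^ 2 * ((2 - p) ^ 2 - 4 * α - 2 * α ^ 2) + 2 * α ^ 2 * u ^ 3
      ≤ rdeDisc α p (1 - u) := by
  have hexp : Real.exp (α * (1 - u - 1)) ≤ 1 - α * u + (α * u) ^ 2 / 2 := by
    rw [show α * (1 - u - 1) = -(α * u) by ring]
    exact exp_neg_le_one_sub_add_sq_div_two (by positivity)
  rw [rdeDisc]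
  nlinarith [mul_le_mul_of_nonneg_left hexp (by linarith : 0 ≤ 4 * (1 - u))]

lemma rdeDisc_pos {α p s : ℝ} (hα0 : 0 < α) (hα : (1 + α) ^ 2 ≤ 2) (hp : 1 - α ≤ p)
    (hs0 : 0 ≤ s) (hs1 : s < 1) : 0 < rdeDisc α p s := by
  have hu : 0 < 1 - s := by linarith
  have h := le_rdeDisc_one_sub hα0.le p hu.le (by linarith)
  rw [sub_sub_cancel] at h
  have hα1 : α < 1 := by nlinarith
  have hp2 : (1 - α) ^ 2 ≤ p ^ 2 := pow_le_pow_left₀ (by linarith) hp 2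
  -- `4u(p + α - 1) ≥ 4u²(p + α - 1)` turns the lower bound into `u²(p² - 2α²) + 2α²u³`
  nlinarith [mul_nonneg (mul_nonneg hu.le (sub_nonneg.mpr hp)) hs0,
    mul_nonneg (sq_nonneg (1 - s)) (by nlinarith : 0 ≤ p ^ 2 - 2 * α ^ 2),
    mul_pos (mul_pos hα0 hα0) (pow_pos hu 3)]

lemma sq_mul_lt_rdeDisc {α p : ℝ} (hα0 : 0 ≤ α) (hα1 : α ≤ 1) (hp : 1 - α < p) (hp1 : p ≤ 1) :
    (p * ((p + α - 1) / 4)) ^ 2 < rdeDisc α p (1 - (p + α - 1) / 4) := by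
  set u := (p + α - 1) / 4 with hu
  have hu0 : 0 < u := by linarith
  have h := le_rdeDisc_one_sub hα0 p hu0.le (by linarith)
  rw [show p + α - 1 = 4 * u by linarith] at h
  have hcoef : 10 ≤ 16 + (2 - p) ^ 2 - 4 * α - 2 * α ^ 2 - p ^ 2 := by nlinarith
  nlinarith [mul_le_mul_of_nonneg_left hcoef (sq_nonneg u),
    mul_nonneg (sq_nonneg α) (pow_pos hu0 3).le, pow_pos hu0 2]

section SatisfiesRDE

variable {α : ℝ} {μ : ℕ → ℝ≥0∞}

lemma ennPgf_mul_two_of_satisfiesRDE (hμ : SatisfiesRDE α μ) (x : ℝ≥0∞) :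
    ennPgf μ x * 2 = ennPgf (poissonPMF α) x + ennPgf (shiftLaw μ) x * ennPgf μ x := by
  have hmix : ennPgf μ x
      = ∑' n, geomHalf n * (ennPgf (poissonPMF α) x * ennPgf (shiftLaw μ) x ^ n) := by
    conv_lhs => rw [ennPgf]; enter [1, k]; rw [hμ.2 k, ← ENNReal.tsum_mul_right]
    rw [ENNReal.tsum_comm]
    refine tsum_congr fun n => ?_
    simp_rw [mul_assoc, ENNReal.tsum_mul_left, ← ennPgf_iterConv, ← ennPgf_convAdd, ennPgf]
  rw [hmix, tsum_geomHalf_mul_pow_mul_two]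

lemma ennPgf_quadratic (hμ : SatisfiesRDE α μ) (x : ℝ≥0∞) :
    x * ennPgf μ x * 2 + ennPgf μ x * μ 0
      = x * ennPgf (poissonPMF α) x + ennPgf μ x * (ennPgf μ x + μ 0 * x) := by
  rw [← mul_ennPgf_shiftLaw_add, mul_assoc, ennPgf_mul_two_of_satisfiesRDE hμ]
  ring

lemma pgf_quadratic (hα : 0 ≤ α) (hμ : SatisfiesRDE α μ) {s : ℝ} (hs0 : 0 ≤ s) (hs1 : s ≤ 1) :
    pgf μ s * ((2 - (μ 0).toReal) * s + (μ 0).toReal - pgf μ s)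
      = s * Real.exp (α * (s - 1)) := by
  have hG := ennPgf_ofReal (μ := μ) (by simp [hμ.1]) hs0 hs1
  have hμ0 : μ 0 ≠ ∞ := ne_top_of_le_ne_top (by simp [hμ.1]) (ENNReal.le_tsum 0)
  have h := congrArg ENNReal.toReal (ennPgf_quadratic hμ (ENNReal.ofReal s))
  rw [hG, ennPgf_poissonPMF hα hs0, ENNReal.toReal_add (by finiteness) (by finiteness),
    ENNReal.toReal_add (by finiteness) (by finiteness),
    ENNReal.toReal_mul (b := _ + _), ENNReal.toReal_add (by finiteness) (by finiteness)] at h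
  simp only [ENNReal.toReal_mul, ENNReal.toReal_ofNat, ENNReal.toReal_ofReal hs0,
    ENNReal.toReal_ofReal (Real.exp_nonneg _), ENNReal.toReal_ofReal (pgf_nonneg μ hs0)] at h
  linear_combination h

lemma sq_two_mul_pgf_sub_eq_rdeDisc (hα : 0 ≤ α) (hμ : SatisfiesRDE α μ) {s : ℝ} (hs0 : 0 ≤ s)
    (hs1 : s ≤ 1) :
    (2 * pgf μ s - ((2 - (μ 0).toReal) * s + (μ 0).toReal)) ^ 2 = rdeDisc α (μ 0).toReal s := by
  rw [rdeDisc]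
  linear_combination (-4) * pgf_quadratic hα hμ hs0 hs1

lemma one_sub_le_toReal_zero (hα : 0 ≤ α) (hμ : SatisfiesRDE α μ) : 1 - α ≤ (μ 0).toReal := by
  by_contra! hlt
  set p := (μ 0).toReal
  set u := (1 - α - p) / 2 with hu
  have hp0 : 0 ≤ p := ENNReal.toReal_nonneg
  have hp1 : p ≤ 1 := toReal_le_one_of_tsum_eq_one hμ.1 0
  have hnonneg : 0 ≤ rdeDisc α p (1 - u) := by
    rw [← sq_two_mul_pgf_sub_eq_rdeDisc hα hμ (by linarith) (by linarith)]
    positivity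
  have hle : rdeDisc α p (1 - u) ≤ 4 * u * (p + α - 1) + u ^ 2 * ((2 - p) ^ 2 - 4 * α) :=
    rdeDisc_one_sub_le α p (by linarith)
  have hcoef : (2 - p) ^ 2 - 4 * α ≤ 4 := by nlinarith
  have hlin : 4 * u * (p + α - 1) = -8 * u ^ 2 := by rw [hu]; ring
  nlinarith [mul_le_mul_of_nonneg_left hcoef (sq_nonneg u), sq_pos_of_pos (by linarith : 0 < u)]

lemma toReal_zero_le_one_sub (hα0 : 0 < α) (hα : (1 + α) ^ 2 ≤ 2) (hμ : SatisfiesRDE α μ) :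
    (μ 0).toReal ≤ 1 - α := by
  by_contra! hlt
  have hα1 : α < 1 := by nlinarith
  set p := (μ 0).toReal
  set F := fun t => 2 * pgf μ t - ((2 - p) * t + p)
  have hFsq (t : ℝ) (ht0 : 0 ≤ t) (ht1 : t ≤ 1) : F t ^ 2 = rdeDisc α p t :=
    sq_two_mul_pgf_sub_eq_rdeDisc hα0.le hμ ht0 ht1
  have hFpos (t : ℝ) (ht0 : 0 ≤ t) (ht1 : t < 1) : 0 < F t := by
    by_contra! hFt
    have hF0 : F 0 = p := by
      simp only [F, pgf_zero, p]
      ring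
    have hcont : ContinuousOn F (Set.Icc 0 t) :=
      ((continuousOn_const.mul (continuousOn_pgf (by simp [hμ.1]))).sub (by fun_prop)).mono
        (Set.Icc_subset_Icc le_rfl ht1.le)
    obtain ⟨c, hc, hFc⟩ := intermediate_value_Icc' ht0 hcont ⟨hFt, by linarith⟩
    have := rdeDisc_pos hα0 hα hlt.le hc.1 (hc.2.trans_lt ht1)
    rw [← hFsq c hc.1 (by linarith [hc.2]), hFc] at this
    simp at this
  have hp1 : p ≤ 1 := toReal_le_one_of_tsum_eq_one hμ.1 0
  set u := (p + α - 1) / 4 with hu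
  have hpos : 0 < F (1 - u) := hFpos (1 - u) (by linarith) (by linarith)
  have hchord : pgf μ (1 - u) ≤ 1 - u + (1 - (1 - u)) * p :=
    pgf_le_add_mul_toReal_zero hμ.1 (by linarith) (by linarith)
  have hlt : (p * u) ^ 2 < F (1 - u) ^ 2 := by
    rw [hFsq (1 - u) (by linarith) (by linarith)]
    exact sq_mul_lt_rdeDisc hα0.le hα1.le hlt hp1
  have hFle : F (1 - u) ≤ p * u := by
    simp only [F]
    linarith
  nlinarith

end SatisfiesRDE

/-- For 0 < α ≤ √2 − 1, any ℕ-valued random variable X satisfying the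
RDE has P(X = 0) = 1 − α. -/
theorem prob_zero_eq_one_sub_alpha
    (α : ℝ) (hα0 : 0 < α) (hα1 : α ≤ Real.sqrt 2 - 1)
    (μ : ℕ → ℝ≥0∞) (hμ : SatisfiesRDE α μ) :
    (μ 0).toReal = 1 - α := by
  have hα : (1 + α) ^ 2 ≤ 2 :=
    (Real.le_sqrt (by linarith) zero_le_two).mp (by linarith)
  exact le_antisymm (toReal_zero_le_one_sub hα0 hα hμ) (one_sub_le_toReal_zero hα0.le hμ)
end

section
/- Let α ∈ (0,1) and let X be an ℕ-valued random variable satisfying the recursive distributional equation. Then p = P(X = 0) ≥ (1/2)·exp(−α) > 0; moreover, either E[X] = ∞ or p = 1 − α (or both). -/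
open scoped ENNReal

section Aux

lemma tsum_conv_key (F : ℕ → ℕ → ℝ≥0∞) :
    ∑' k, ∑ j ∈ Finset.range (k + 1), F j (k - j) = ∑' j, ∑' i, F j i := by
  have h1 : ∀ k : ℕ, ∑ j ∈ Finset.range (k + 1), F j (k - j)
      = ∑' j : ℕ, if j ≤ k then F j (k - j) else 0 := by
    intro k
    rw [tsum_eq_sum (s := Finset.range (k + 1))
      (fun j hj => by
        simp only [Finset.mem_range, Nat.lt_succ_iff] at hj
        simp [hj])]
    exact Finset.sum_congr rfl fun j hj => by
      simp only [Finset.mem_range, Nat.lt_succ_iff] at hj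
      simp [hj]
  simp_rw [h1]
  rw [ENNReal.tsum_comm]
  refine tsum_congr fun j => ?_
  have hinj : Function.Injective (fun i : ℕ => j + i) := fun a b h => by
    simpa using h
  have hsupp : Function.support (fun k : ℕ => if j ≤ k then F j (k - j) else 0)
      ⊆ Set.range (fun i : ℕ => j + i) := by
    intro k hk
    simp only [Function.mem_support, ne_eq, ite_eq_right_iff, not_forall] at hk
    obtain ⟨hle, -⟩ := hk
    exact ⟨k - j, by dsimp; omega⟩
  rw [← Function.Injective.tsum_eq hinj hsupp]
  exact tsum_congr fun i => by simp

lemma tsum_convAdd (f g : ℕ → ℝ≥0∞) :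
    ∑' k, convAdd f g k = (∑' k, f k) * (∑' k, g k) := by
  unfold convAdd
  rw [tsum_conv_key (fun j i => f j * g i)]
  simp_rw [ENNReal.tsum_mul_left]
  exact ENNReal.tsum_mul_right

lemma tsum_mul_convAdd (f g : ℕ → ℝ≥0∞) :
    ∑' k : ℕ, (k : ℝ≥0∞) * convAdd f g k
      = (∑' k : ℕ, (k : ℝ≥0∞) * f k) * (∑' k, g k)
        + (∑' k, f k) * (∑' k : ℕ, (k : ℝ≥0∞) * g k) := by
  have h : ∀ k : ℕ, (k : ℝ≥0∞) * convAdd f g k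
      = (∑ j ∈ Finset.range (k + 1), ((j : ℝ≥0∞) * f j) * g (k - j))
        + ∑ j ∈ Finset.range (k + 1), f j * (((k - j : ℕ) : ℝ≥0∞) * g (k - j)) := by
    intro k
    unfold convAdd
    rw [Finset.mul_sum, ← Finset.sum_add_distrib]
    refine Finset.sum_congr rfl fun j hj => ?_
    simp only [Finset.mem_range, Nat.lt_succ_iff] at hj
    have hk : (k : ℝ≥0∞) = (j : ℝ≥0∞) + ((k - j : ℕ) : ℝ≥0∞) := by
      rw [← Nat.cast_add]
      congr 1
      omega
    rw [hk, add_mul]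
    ring
  simp_rw [h]
  rw [ENNReal.tsum_add,
      tsum_conv_key (fun j i => ((j : ℝ≥0∞) * f j) * g i),
      tsum_conv_key (fun j i => f j * ((i : ℝ≥0∞) * g i))]
  congr 1
  · simp_rw [ENNReal.tsum_mul_left]
    exact ENNReal.tsum_mul_right
  · simp_rw [ENNReal.tsum_mul_left]
    exact ENNReal.tsum_mul_right

lemma iterConv_mass (f : ℕ → ℝ≥0∞) (hf : ∑' k, f k = 1) :
    ∀ n, ∑' k, iterConv f n k = 1
  | 0 => by simp [iterConv]
  | n + 1 => by
      rw [show iterConv f (n+1) = convAdd (iterConv f n) f from rfl, tsum_convAdd,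
        iterConv_mass f hf n, hf, one_mul]

lemma iterConv_mean (f : ℕ → ℝ≥0∞) (hf : ∑' k, f k = 1) :
    ∀ n, ∑' k : ℕ, (k : ℝ≥0∞) * iterConv f n k = (n : ℝ≥0∞) * ∑' k : ℕ, (k : ℝ≥0∞) * f k
  | 0 => by
      have h0 : ∀ k : ℕ, (k : ℝ≥0∞) * iterConv f 0 k = 0 := by
        intro k
        cases k <;> simp [iterConv]
      rw [tsum_congr h0]
      simp
  | n + 1 => by
      rw [show iterConv f (n+1) = convAdd (iterConv f n) f from rfl, tsum_mul_convAdd,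
        iterConv_mean f hf n, iterConv_mass f hf n, hf, one_mul, mul_one]
      push_cast
      ring

lemma poisson_hasSum {α : ℝ} (hα : 0 < α) :
    HasSum (fun k : ℕ => Real.exp (-α) * α ^ k / (Nat.factorial k)) 1 := by
  have h := ProbabilityTheory.poissonPMFRealSum α.toNNReal
  unfold ProbabilityTheory.poissonPMFReal at h
  simpa [Real.coe_toNNReal α hα.le] using h

lemma poisson_mass {α : ℝ} (hα : 0 < α) : ∑' k, poissonPMF α k = 1 := by
  have hs := poisson_hasSum hα
  unfold poissonPMF
  rw [← ENNReal.ofReal_one, ← hs.tsum_eq,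
    ENNReal.ofReal_tsum_of_nonneg (fun k => by positivity) hs.summable]

lemma poisson_mean {α : ℝ} (hα : 0 < α) :
    ∑' k : ℕ, (k : ℝ≥0∞) * poissonPMF α k = ENNReal.ofReal α := by
  set f : ℕ → ℝ := fun k => (k : ℝ) * (Real.exp (-α) * α ^ k / (Nat.factorial k)) with hf_def
  have hshift : (fun k : ℕ => f (k + 1))
      = fun k : ℕ => α * (Real.exp (-α) * α ^ k / (Nat.factorial k)) := by
    funext k
    have h1 : (Nat.factorial k : ℝ) ≠ 0 := by
      exact_mod_cast (Nat.factorial_pos k).ne'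
    simp only [hf_def, Nat.factorial_succ]
    push_cast
    field_simp
    ring
  have hs : HasSum (fun k : ℕ => f (k + 1)) α := by
    rw [hshift]
    simpa using (poisson_hasSum hα).mul_left α
  have hf : HasSum f α := by
    have h := (hasSum_nat_add_iff 1).mp hs
    simpa [hf_def] using h
  have hnn : ∀ k : ℕ, 0 ≤ f k := by
    intro k
    have : (0:ℝ) ≤ Real.exp (-α) * α ^ k / (Nat.factorial k) := by positivity
    exact mul_nonneg (Nat.cast_nonneg k) this
  calc ∑' k : ℕ, (k : ℝ≥0∞) * poissonPMF α k
      = ∑' k : ℕ, ENNReal.ofReal (f k) := by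
        refine tsum_congr fun k => ?_
        unfold poissonPMF
        rw [hf_def, ENNReal.ofReal_mul (Nat.cast_nonneg k), ENNReal.ofReal_natCast]
    _ = ENNReal.ofReal (∑' k, f k) :=
        (ENNReal.ofReal_tsum_of_nonneg hnn hf.summable).symm
    _ = ENNReal.ofReal α := by rw [hf.tsum_eq]

lemma half_enn : (1 / 2 : ℝ≥0∞) = ENNReal.ofReal (1 / 2 : ℝ) := by
  rw [show (1/2 : ℝ) = (2:ℝ)⁻¹ by norm_num, ENNReal.ofReal_inv_of_pos (by norm_num),
    ENNReal.ofReal_ofNat, one_div]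

lemma geom_mass : ∑' n : ℕ, geomHalf n = 1 := by
  have hsum : Summable (fun n : ℕ => (1/2 : ℝ) ^ (n + 1)) := by
    simp_rw [pow_succ']
    exact (summable_geometric_of_lt_one (by norm_num) (by norm_num)).mul_left _
  have hval : ∑' n : ℕ, (1/2 : ℝ) ^ (n + 1) = 1 := by
    simp_rw [pow_succ']
    rw [tsum_mul_left, tsum_geometric_of_lt_one (by norm_num) (by norm_num)]
    norm_num
  have h : ∀ n : ℕ, geomHalf n = ENNReal.ofReal ((1/2 : ℝ) ^ (n + 1)) := by
    intro n
    rw [geomHalf, half_enn, ← ENNReal.ofReal_pow (by norm_num)]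
  rw [tsum_congr h, ← ENNReal.ofReal_tsum_of_nonneg (fun n => by positivity) hsum, hval,
    ENNReal.ofReal_one]

lemma geom_mean : ∑' n : ℕ, (n : ℝ≥0∞) * geomHalf n = 1 := by
  have hnorm : ‖(1/2 : ℝ)‖ < 1 := by
    rw [Real.norm_eq_abs, abs_of_pos (by norm_num)]; norm_num
  have hsum : Summable (fun n : ℕ => (n : ℝ) * (1/2 : ℝ) ^ (n + 1)) := by
    simp_rw [pow_succ, ← mul_assoc]
    exact (hasSum_coe_mul_geometric_of_norm_lt_one hnorm).summable.mul_right _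
  have hval : ∑' n : ℕ, (n : ℝ) * (1/2 : ℝ) ^ (n + 1) = 1 := by
    simp_rw [pow_succ, ← mul_assoc]
    rw [tsum_mul_right, tsum_coe_mul_geometric_of_norm_lt_one hnorm]
    norm_num
  have h : ∀ n : ℕ, (n : ℝ≥0∞) * geomHalf n
      = ENNReal.ofReal ((n : ℝ) * (1/2 : ℝ) ^ (n + 1)) := by
    intro n
    rw [geomHalf, half_enn, ← ENNReal.ofReal_pow (by norm_num),
      ENNReal.ofReal_mul (Nat.cast_nonneg n), ENNReal.ofReal_natCast]
  rw [tsum_congr h,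
    ← ENNReal.ofReal_tsum_of_nonneg (fun n => by positivity) hsum, hval, ENNReal.ofReal_one]

lemma shift_mass (μ : ℕ → ℝ≥0∞) (h : ∑' k, μ k = 1) : ∑' k, shiftLaw μ k = 1 := by
  rw [tsum_eq_zero_add' ENNReal.summable] at h ⊢
  rw [tsum_eq_zero_add' ENNReal.summable] at h
  have h1 : ∀ k : ℕ, shiftLaw μ (k + 1) = μ (k + 2) := fun k => by simp [shiftLaw]
  rw [tsum_congr h1]
  show μ 0 + μ 1 + _ = 1
  rw [add_assoc]
  simpa [add_assoc] using h

lemma shift_mean (μ : ℕ → ℝ≥0∞) :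
    (∑' k : ℕ, (k : ℝ≥0∞) * shiftLaw μ k) + ∑' k : ℕ, μ (k + 1)
      = ∑' k : ℕ, (k : ℝ≥0∞) * μ k := by
  have e1 : ∑' k : ℕ, (k : ℝ≥0∞) * shiftLaw μ k
      = ∑' k : ℕ, ((k + 1 : ℕ) : ℝ≥0∞) * μ (k + 2) := by
    rw [tsum_eq_zero_add' ENNReal.summable]
    have h1 : ∀ k : ℕ, ((k + 1 : ℕ) : ℝ≥0∞) * shiftLaw μ (k + 1)
        = ((k + 1 : ℕ) : ℝ≥0∞) * μ (k + 2) := fun k => by simp [shiftLaw]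
    rw [tsum_congr h1]
    simp
  have e2 : ∑' k : ℕ, μ (k + 1) = μ 1 + ∑' k : ℕ, μ (k + 2) :=
    tsum_eq_zero_add' ENNReal.summable
  have e3 : ∑' k : ℕ, (k : ℝ≥0∞) * μ k
      = μ 1 + ∑' k : ℕ, ((k + 2 : ℕ) : ℝ≥0∞) * μ (k + 2) := by
    rw [tsum_eq_zero_add' ENNReal.summable]
    rw [tsum_eq_zero_add' (f := fun k : ℕ => ((k + 1 : ℕ) : ℝ≥0∞) * μ (k + 1)) ENNReal.summable]
    simp [add_assoc]
  rw [e1, e2, e3, ← add_assoc, add_comm (∑' k : ℕ, ((k + 1 : ℕ) : ℝ≥0∞) * μ (k + 2)) (μ 1),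
    add_assoc, ← ENNReal.tsum_add]
  congr 1
  refine tsum_congr fun k => ?_
  push_cast
  ring

end Aux

/-- For α ∈ (0,1), p = P(X = 0) ≥ (1/2)·exp(−α) > 0; moreover either
E[X] = ∞ or p = 1 − α (or both). -/
theorem prob_zero_lower_bound_and_dichotomy
    (α : ℝ) (hα0 : 0 < α) (hα1 : α < 1)
    (μ : ℕ → ℝ≥0∞) (hμ : SatisfiesRDE α μ) :
    (1 / 2) * Real.exp (-α) ≤ (μ 0).toReal ∧
    0 < (1 / 2) * Real.exp (-α) ∧
    (meanENN μ = ⊤ ∨ (μ 0).toReal = 1 - α) := by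
  obtain ⟨hmass, hrec⟩ := hμ
  have hexp : (0:ℝ) < Real.exp (-α) := Real.exp_pos _
  have hpos : 0 < (1/2 : ℝ) * Real.exp (-α) := by positivity
  have hμ0le : μ 0 ≤ 1 := hmass ▸ ENNReal.le_tsum 0
  have hμ0ne : μ 0 ≠ ⊤ := ne_top_of_le_ne_top ENNReal.one_ne_top hμ0le
  have hlb : ENNReal.ofReal ((1/2) * Real.exp (-α)) ≤ μ 0 := by
    rw [hrec 0]
    refine le_trans ?_ (ENNReal.le_tsum 0)
    have hc : convAdd (poissonPMF α) (iterConv (shiftLaw μ) 0) 0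
        = ENNReal.ofReal (Real.exp (-α)) := by
      simp [convAdd, iterConv, poissonPMF]
    rw [hc, geomHalf, pow_one, half_enn, ← ENNReal.ofReal_mul (by norm_num)]
  have h1 : (1/2 : ℝ) * Real.exp (-α) ≤ (μ 0).toReal := by
    have h := ENNReal.toReal_mono hμ0ne hlb
    rwa [ENNReal.toReal_ofReal hpos.le] at h
  refine ⟨h1, hpos, ?_⟩
  by_cases hM : meanENN μ = ⊤
  · exact Or.inl hM
  right
  set Ms := ∑' k : ℕ, (k : ℝ≥0∞) * shiftLaw μ k with hMs_def
  have hsm : ∑' k, shiftLaw μ k = 1 := shift_mass μ hmass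
  have hiterM : ∀ n, ∑' k, iterConv (shiftLaw μ) n k = 1 := iterConv_mass _ hsm
  have hiterMean : ∀ n : ℕ, ∑' k : ℕ, (k : ℝ≥0∞) * iterConv (shiftLaw μ) n k
      = (n : ℝ≥0∞) * Ms := iterConv_mean _ hsm
  have hconvmean : ∀ n : ℕ,
      ∑' k : ℕ, (k : ℝ≥0∞) * convAdd (poissonPMF α) (iterConv (shiftLaw μ) n) k
        = ENNReal.ofReal α + (n : ℝ≥0∞) * Ms := by
    intro n
    rw [tsum_mul_convAdd, poisson_mean hα0, poisson_mass hα0, hiterM n, hiterMean n,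
      mul_one, one_mul]
  have hMeq : meanENN μ = ENNReal.ofReal α + Ms := by
    unfold meanENN
    calc ∑' k : ℕ, (k : ℝ≥0∞) * μ k
        = ∑' k : ℕ, ∑' n : ℕ, geomHalf n
            * ((k : ℝ≥0∞) * convAdd (poissonPMF α) (iterConv (shiftLaw μ) n) k) := by
          refine tsum_congr fun k => ?_
          rw [hrec k, ← ENNReal.tsum_mul_left]
          exact tsum_congr fun n => by ring
      _ = ∑' n : ℕ, geomHalf n
            * ∑' k : ℕ, (k : ℝ≥0∞) * convAdd (poissonPMF α) (iterConv (shiftLaw μ) n) k := by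
          rw [ENNReal.tsum_comm]
          exact tsum_congr fun n => ENNReal.tsum_mul_left
      _ = ∑' n : ℕ, geomHalf n * (ENNReal.ofReal α + (n : ℝ≥0∞) * Ms) := by
          exact tsum_congr fun n => by rw [hconvmean n]
      _ = (∑' n : ℕ, geomHalf n * ENNReal.ofReal α)
            + ∑' n : ℕ, geomHalf n * ((n : ℝ≥0∞) * Ms) := by
          simp_rw [mul_add]
          exact ENNReal.tsum_add
      _ = ENNReal.ofReal α + Ms := by
          congr 1
          · simp_rw [mul_comm (geomHalf _) (ENNReal.ofReal α)]
            rw [ENNReal.tsum_mul_left, geom_mass, mul_one]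
          · have : ∀ n : ℕ, geomHalf n * ((n : ℝ≥0∞) * Ms)
                = Ms * ((n : ℝ≥0∞) * geomHalf n) := fun n => by ring
            rw [tsum_congr this, ENNReal.tsum_mul_left, geom_mean, mul_one]
  have hrel : Ms + (∑' k : ℕ, μ (k + 1)) = meanENN μ := shift_mean μ
  have hMs_ne : Ms ≠ ⊤ := by
    intro h
    exact hM (by rw [hMeq, h, add_top])
  have hT : ∑' k : ℕ, μ (k + 1) = ENNReal.ofReal α := by
    have h : Ms + (∑' k : ℕ, μ (k + 1)) = Ms + ENNReal.ofReal α := by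
      rw [hrel, hMeq, add_comm]
    exact (ENNReal.add_right_inj hMs_ne).mp h
  have hsplit : μ 0 + ∑' k : ℕ, μ (k + 1) = 1 := by
    rw [← hmass]
    exact (tsum_eq_zero_add' ENNReal.summable).symm
  rw [hT] at hsplit
  have hfinal : (μ 0).toReal + α = 1 := by
    have h' := congrArg ENNReal.toReal hsplit
    rwa [ENNReal.toReal_add hμ0ne ENNReal.ofReal_ne_top, ENNReal.toReal_ofReal hα0.le,
      ENNReal.toReal_one] at h'
  linarith
end
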